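/- arXiv:2305.11025 — 3 statements merged into one kernel-verified Lean document; each statement's English description precedes it below -/
import Mathlib

section
/- Let I : 𝔻 → 𝔻 be an inner function, α ∈ 𝕋, and σ_α its Clark measure. Then the radial boundary value I(ζ) exists and equals α for σ_α-almost every ζ ∈ 𝕋. -/
open MeasureTheory Complex Filter Real Set

noncomputable section

def unitDisk : Set ℂ := {z : ℂ | ‖z‖ < 1}

def unitCircle : Set ℂ := {z : ℂ | ‖z‖ = 1}

/-- Normalized Lebesgue (arclength) measure on the unit circle, realized as a measure on `ℂ`. -/
def mCircle : Measure ℂ :=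
  (ENNReal.ofReal (2 * π))⁻¹ •
    Measure.map (fun θ : ℝ => Complex.exp (θ * Complex.I))
      (volume.restrict (Set.Ioc 0 (2 * π)))

/-- `f` has radial limit `L` at the boundary point `ζ`. -/
def HasRadialLimit (f : ℂ → ℂ) (ζ L : ℂ) : Prop :=
  Filter.Tendsto (fun r : ℝ => f ((r : ℂ) * ζ)) (nhdsWithin 1 (Set.Iio 1)) (nhds L)

/-- `I` is an inner function on the unit disk with boundary-value function `Ib`. -/
def IsInner (I Ib : ℂ → ℂ) : Prop :=
  DifferentiableOn ℂ I unitDisk ∧ Set.MapsTo I unitDisk unitDisk ∧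
    ∀ᵐ ζ ∂mCircle, HasRadialLimit I ζ (Ib ζ) ∧ ‖Ib ζ‖ = 1

/-- Poisson integral of a (positive finite) measure on the circle. -/
def poissonIntegral (μ : Measure ℂ) (z : ℂ) : ℝ :=
  ∫ ζ, (1 - ‖z‖ ^ 2) / ‖ζ - z‖ ^ 2 ∂μ

/-- `σ` is the Clark measure of the inner function `I` at `α ∈ 𝕋`. -/
def IsClarkMeasure (I : ℂ → ℂ) (α : ℂ) (σ : Measure ℂ) : Prop :=
  IsFiniteMeasure σ ∧ σ unitCircleᶜ = 0 ∧
    ∀ z ∈ unitDisk, poissonIntegral σ z =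
      (1 - ‖I z‖ ^ 2) / ‖α - I z‖ ^ 2

/-!
Differentiate `mCircle` with respect to `σ`: at `σ`-a.e. `ζ` the ratio
`mCircle (B(ζ, δ)) / σ (B(ζ, δ))` tends to a finite limit `g ζ` as `δ → 0`. The ball
`B(ζ, (1 - r) / 2)` alone contributes `≳ σ (B) / (1 - r)` to the Poisson integral at `r ζ`, so
`P[σ](r ζ)` stays bounded below by a positive constant as `r → 1`, and tends to `∞` when `g ζ = 0`.
In that case `‖α - I (r ζ)‖² ≤ 1 / P[σ](r ζ) → 0`. When `g ζ ≠ 0`, the point is `mCircle`-typical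
(since `σ.withDensity g ≤ mCircle`), so `I` has a unimodular radial limit `L` at `ζ`; if `L ≠ α`
then `P[σ](r ζ) = (1 - ‖I (r ζ)‖²) / ‖α - I (r ζ)‖² → 0`, contradicting the lower bound.
-/

open Topology Metric

lemma measurable_exp_mul_I : Measurable fun θ : ℝ => exp (θ * I) := by
  fun_prop

instance : IsFiniteMeasure mCircle := by
  constructor
  rw [mCircle, Measure.smul_apply, Measure.map_apply measurable_exp_mul_I MeasurableSet.univ]
  simp only [preimage_univ, Measure.restrict_apply MeasurableSet.univ, univ_inter,
    Real.volume_Ioc, smul_eq_mul]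
  exact ENNReal.mul_lt_top (ENNReal.inv_lt_top.2 (by positivity)) ENNReal.ofReal_lt_top

lemma dist_exp_mul_I_le (θ θ' : ℝ) : dist (exp (θ * I)) (exp (θ' * I)) ≤ dist θ θ' := by
  simpa [circleMap] using (lipschitzWith_circleMap 0 1).dist_le_mul θ θ'

lemma exists_mem_Ioc_exp_mul_I_eq {ζ : ℂ} (hζ : ζ ∈ unitCircle) :
    ∃ θ ∈ Ioc 0 (2 * π), exp (θ * I) = ζ := by
  refine ⟨toIocMod two_pi_pos 0 (arg ζ), by simpa using toIocMod_mem_Ioc two_pi_pos 0 (arg ζ), ?_⟩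
  have hexp : exp (arg ζ * I) = ζ := by
    simpa [show ‖ζ‖ = 1 from hζ] using norm_mul_exp_arg_mul_I ζ
  rw [toIocMod]
  push_cast
  rw [exp_mul_I_periodic.sub_zsmul_eq, hexp]

lemma ofReal_div_le_mCircle_closedBall {ζ : ℂ} (hζ : ζ ∈ unitCircle) {δ : ℝ} (hδ : 0 < δ)
    (hδπ : δ ≤ π) : ENNReal.ofReal (δ / (2 * π)) ≤ mCircle (closedBall ζ δ) := by
  obtain ⟨θ₀, ⟨hθ₀, hθ₀'⟩, rfl⟩ := exists_mem_Ioc_exp_mul_I_eq hζ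
  obtain ⟨a, hsub, hclose⟩ : ∃ a : ℝ, Ioc a (a + δ) ⊆ Ioc 0 (2 * π) ∧
      ∀ θ ∈ Ioc a (a + δ), dist θ θ₀ ≤ δ := by
    rcases le_or_gt θ₀ π with h | h
    · refine ⟨θ₀, fun θ hθ => ⟨by linarith [hθ.1], by linarith [hθ.2]⟩, fun θ hθ => ?_⟩
      rw [Real.dist_eq, abs_le]; constructor <;> linarith [hθ.1, hθ.2]
    · refine ⟨θ₀ - δ, fun θ hθ => ⟨by linarith [hθ.1], by linarith [hθ.2]⟩, fun θ hθ => ?_⟩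
      rw [Real.dist_eq, abs_le]; constructor <;> linarith [hθ.1, hθ.2]
  have harc : Ioc a (a + δ) ⊆
      (fun θ : ℝ => exp (θ * I)) ⁻¹' closedBall (exp (θ₀ * I)) δ ∩ Ioc 0 (2 * π) :=
    fun θ hθ => ⟨(dist_exp_mul_I_le θ θ₀).trans (hclose θ hθ), hsub hθ⟩
  rw [mCircle, Measure.smul_apply, Measure.map_apply measurable_exp_mul_I measurableSet_closedBall,
    Measure.restrict_apply (measurable_exp_mul_I measurableSet_closedBall), smul_eq_mul,
    ENNReal.ofReal_div_of_pos (by positivity), ENNReal.div_eq_inv_mul]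
  gcongr
  calc ENNReal.ofReal δ = volume (Ioc a (a + δ)) := by rw [Real.volume_Ioc, add_sub_cancel_left]
    _ ≤ _ := measure_mono harc

lemma ofReal_mul_mem_unitDisk {ζ : ℂ} (hζ : ζ ∈ unitCircle) {r : ℝ} (hr : |r| < 1) :
    (r : ℂ) * ζ ∈ unitDisk := by
  change ‖(r : ℂ) * ζ‖ < 1
  rwa [norm_mul, norm_real, Real.norm_eq_abs, show ‖ζ‖ = 1 from hζ, mul_one]

lemma eventually_ofReal_mul_mem_unitDisk {ζ : ℂ} (hζ : ζ ∈ unitCircle) :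
    ∀ᶠ r : ℝ in 𝓝[<] 1, (r : ℂ) * ζ ∈ unitDisk := by
  filter_upwards [Ioo_mem_nhdsLT (neg_lt_self one_pos)] with r hr
  exact ofReal_mul_mem_unitDisk hζ (abs_lt.2 hr)

section PoissonIntegral

variable {σ : Measure ℂ} [IsFiniteMeasure σ]

lemma integrable_poissonKernel (hσ : σ unitCircleᶜ = 0) {z : ℂ} (hz : z ∈ unitDisk) :
    Integrable (fun w => (1 - ‖z‖ ^ 2) / ‖w - z‖ ^ 2) σ := by
  have hz : ‖z‖ < 1 := hz
  refine Integrable.mono' (integrable_const ((1 - ‖z‖ ^ 2) / (1 - ‖z‖) ^ 2))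
    (Measurable.aestronglyMeasurable (by fun_prop)) ?_
  filter_upwards [ae_iff.2 hσ] with w (hw : ‖w‖ = 1)
  have hgap : 1 - ‖z‖ ≤ ‖w - z‖ := by linarith [norm_sub_norm_le w z]
  rw [Real.norm_eq_abs, abs_of_nonneg (div_nonneg (by nlinarith [norm_nonneg z]) (by positivity))]
  gcongr
  nlinarith [norm_nonneg z]

lemma poissonKernel_ge_of_mem_closedBall {ζ : ℂ} (hζ : ζ ∈ unitCircle) {r : ℝ} (hr₀ : 0 ≤ r)
    (hr₁ : r < 1) {w : ℂ} (hw : w ∈ closedBall ζ ((1 - r) / 2)) :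
    4 / (9 * (1 - r)) ≤ (1 - ‖(r : ℂ) * ζ‖ ^ 2) / ‖w - r * ζ‖ ^ 2 := by
  have hζ : ‖ζ‖ = 1 := hζ
  have hdist : dist ζ (r * ζ) = 1 - r := by
    rw [dist_eq_norm, ← one_sub_mul, norm_mul, hζ, mul_one, ← ofReal_one, ← ofReal_sub,
      norm_real, Real.norm_of_nonneg (by linarith)]
  have hfar : ‖w - r * ζ‖ ≤ 3 / 2 * (1 - r) := by
    rw [← dist_eq_norm]
    linarith [dist_triangle w ζ (r * ζ), mem_closedBall.1 hw]
  have hnear : 0 < ‖w - r * ζ‖ := by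
    rw [← dist_eq_norm]
    linarith [dist_triangle_left ζ (r * ζ) w, mem_closedBall.1 hw]
  rw [norm_mul, norm_real, Real.norm_of_nonneg hr₀, hζ, mul_one]
  calc 4 / (9 * (1 - r)) = (1 - r) / (3 / 2 * (1 - r)) ^ 2 := by
        field_simp [show 1 - r ≠ 0 by linarith]; ring
    _ ≤ (1 - r ^ 2) / ‖w - r * ζ‖ ^ 2 := by
        gcongr <;> nlinarith

lemma measureReal_closedBall_mul_le_poissonIntegral (hσ : σ unitCircleᶜ = 0) {ζ : ℂ}
    (hζ : ζ ∈ unitCircle) {r : ℝ} (hr₀ : 0 ≤ r) (hr₁ : r < 1) :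
    σ.real (closedBall ζ ((1 - r) / 2)) * (4 / (9 * (1 - r))) ≤
      poissonIntegral σ (r * ζ) := by
  have hz := ofReal_mul_mem_unitDisk hζ ((abs_of_nonneg hr₀).trans_lt hr₁)
  have hint := integrable_poissonKernel hσ hz
  calc σ.real (closedBall ζ ((1 - r) / 2)) * (4 / (9 * (1 - r)))
      ≤ ∫ w in closedBall ζ ((1 - r) / 2), (1 - ‖(r : ℂ) * ζ‖ ^ 2) / ‖w - r * ζ‖ ^ 2 ∂σ := by
        rw [← smul_eq_mul]
        exact setIntegral_ge_of_const_le measurableSet_closedBall (measure_ne_top σ _)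
          (fun w hw => poissonKernel_ge_of_mem_closedBall hζ hr₀ hr₁ hw) hint.integrableOn
    _ ≤ poissonIntegral σ (r * ζ) :=
        setIntegral_le_integral hint (Eventually.of_forall fun w =>
          div_nonneg (by nlinarith [hz.out, norm_nonneg ((r : ℂ) * ζ)]) (by positivity))

lemma measure_closedBall_ge_of_ratio_lt {ζ : ℂ} (hζ : ζ ∈ unitCircle) {K : ℝ} (hK : 0 < K)
    (h : ∀ᶠ δ in 𝓝[>] 0, mCircle (closedBall ζ δ) / σ (closedBall ζ δ) <
      ENNReal.ofReal K) :
    ∀ᶠ δ in 𝓝[>] 0, ENNReal.ofReal (δ / (2 * π * K)) ≤ σ (closedBall ζ δ) := by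
  filter_upwards [h, Ioc_mem_nhdsGT pi_pos] with δ hratio hδ
  have hm := ofReal_div_le_mCircle_closedBall hζ hδ.1 hδ.2
  have hσ₀ : σ (closedBall ζ δ) ≠ 0 := by
    intro h₀
    have hm₀ : mCircle (closedBall ζ δ) ≠ 0 :=
      (lt_of_lt_of_le (ENNReal.ofReal_pos.2 (div_pos hδ.1 two_pi_pos)) hm).ne'
    simp [h₀, ENNReal.div_zero hm₀] at hratio
  have hlt := (ENNReal.div_lt_iff (Or.inl hσ₀) (Or.inl (measure_ne_top σ _))).1 hratio
  rw [← div_div, ENNReal.ofReal_div_of_pos hK,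
    ENNReal.div_le_iff (ENNReal.ofReal_pos.2 hK).ne' ENNReal.ofReal_ne_top]
  exact hm.trans (hlt.le.trans_eq (mul_comm _ _))

lemma tendsto_one_sub_div_two_nhdsGT :
    Tendsto (fun r : ℝ => (1 - r) / 2) (𝓝[<] 1) (𝓝[>] 0) := by
  refine tendsto_nhdsWithin_of_tendsto_nhds_of_eventually_within _ ?_
    (eventually_nhdsWithin_of_forall fun r (hr : r < 1) => by simp only [mem_Ioi]; linarith)
  have : Tendsto (fun r : ℝ => (1 - r) / 2) (𝓝 1) (𝓝 ((1 - 1) / 2)) :=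
    (tendsto_const_nhds.sub tendsto_id).div_const 2
  simpa using this.mono_left nhdsWithin_le_nhds

lemma eventually_le_poissonIntegral_of_ratio_lt (hσ : σ unitCircleᶜ = 0) {ζ : ℂ}
    (hζ : ζ ∈ unitCircle) {K : ℝ} (hK : 0 < K)
    (h : ∀ᶠ δ in 𝓝[>] 0, mCircle (closedBall ζ δ) / σ (closedBall ζ δ) <
      ENNReal.ofReal K) :
    ∀ᶠ r : ℝ in 𝓝[<] 1, (9 * π * K)⁻¹ ≤ poissonIntegral σ (r * ζ) := by
  filter_upwards [Ioo_mem_nhdsLT zero_lt_one,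
    tendsto_one_sub_div_two_nhdsGT.eventually (measure_closedBall_ge_of_ratio_lt hζ hK h)]
    with r hr hball
  have hr' : 0 < 1 - r := sub_pos.2 hr.2
  have hreal : (1 - r) / 2 / (2 * π * K) ≤ σ.real (closedBall ζ ((1 - r) / 2)) :=
    (ENNReal.ofReal_le_iff_le_toReal (measure_ne_top σ _)).1 hball
  calc (9 * π * K)⁻¹ = (1 - r) / 2 / (2 * π * K) * (4 / (9 * (1 - r))) := by
        field_simp; ring
    _ ≤ σ.real (closedBall ζ ((1 - r) / 2)) * (4 / (9 * (1 - r))) := by gcongr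
    _ ≤ poissonIntegral σ (r * ζ) :=
        measureReal_closedBall_mul_le_poissonIntegral hσ hζ hr.1.le hr.2

lemma tendsto_poissonIntegral_atTop_of_ratio_tendsto_zero (hσ : σ unitCircleᶜ = 0) {ζ : ℂ}
    (hζ : ζ ∈ unitCircle)
    (h : Tendsto (fun δ => mCircle (closedBall ζ δ) / σ (closedBall ζ δ))
      (𝓝[>] 0) (𝓝 0)) :
    Tendsto (fun r : ℝ => poissonIntegral σ (r * ζ)) (𝓝[<] 1) atTop := by
  refine tendsto_atTop.2 fun M => ?_
  have hK : 0 < (9 * π * max M 1)⁻¹ := by positivity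
  filter_upwards [eventually_le_poissonIntegral_of_ratio_lt hσ hζ hK
    (h.eventually (gt_mem_nhds (ENNReal.ofReal_pos.2 hK)))] with r hr
  calc M ≤ max M 1 := le_max_left M 1
    _ = (9 * π * (9 * π * max M 1)⁻¹)⁻¹ := by field_simp
    _ ≤ poissonIntegral σ (r * ζ) := hr

end PoissonIntegral

section Clark

variable {I : ℂ → ℂ} {α : ℂ} {σ : Measure ℂ}

lemma norm_sub_sq_le_inv_poissonIntegral (hI : MapsTo I unitDisk unitDisk)
    (hσ : ∀ z ∈ unitDisk, poissonIntegral σ z = (1 - ‖I z‖ ^ 2) / ‖α - I z‖ ^ 2)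
    {z : ℂ} (hz : z ∈ unitDisk) :
    ‖α - I z‖ ^ 2 ≤ (poissonIntegral σ z)⁻¹ := by
  have hIz : ‖I z‖ < 1 := hI hz
  rw [hσ z hz, inv_div, le_div_iff₀ (by nlinarith [norm_nonneg (I z)])]
  exact mul_le_of_le_one_right (sq_nonneg _) (sub_le_self _ (sq_nonneg _))

lemma hasRadialLimit_of_tendsto_poissonIntegral_atTop (hI : MapsTo I unitDisk unitDisk)
    (hσ : ∀ z ∈ unitDisk, poissonIntegral σ z = (1 - ‖I z‖ ^ 2) / ‖α - I z‖ ^ 2)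
    {ζ : ℂ} (hζ : ζ ∈ unitCircle)
    (h : Tendsto (fun r : ℝ => poissonIntegral σ (r * ζ)) (𝓝[<] 1) atTop) :
    HasRadialLimit I ζ α := by
  have hsq : Tendsto (fun r : ℝ => ‖α - I (r * ζ)‖ ^ 2) (𝓝[<] 1) (𝓝 0) :=
    squeeze_zero' (Eventually.of_forall fun _ => sq_nonneg _)
      ((eventually_ofReal_mul_mem_unitDisk hζ).mono fun r hr =>
        norm_sub_sq_le_inv_poissonIntegral hI hσ hr)
      h.inv_tendsto_atTop
  have hnorm := hsq.sqrt
  simp only [Real.sqrt_sq (norm_nonneg _), Real.sqrt_zero] at hnorm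
  exact tendsto_iff_norm_sub_tendsto_zero.2 (by simpa only [norm_sub_rev] using hnorm)

lemma eq_of_hasRadialLimit_of_eventually_le_poissonIntegral
    (hσ : ∀ z ∈ unitDisk, poissonIntegral σ z = (1 - ‖I z‖ ^ 2) / ‖α - I z‖ ^ 2)
    {ζ L : ℂ} (hζ : ζ ∈ unitCircle) (hL : HasRadialLimit I ζ L) (hL₁ : ‖L‖ = 1) {c : ℝ}
    (hc : 0 < c) (h : ∀ᶠ r : ℝ in 𝓝[<] 1, c ≤ poissonIntegral σ (r * ζ)) :
    L = α := by
  by_contra hne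
  have hden : ‖α - L‖ ^ 2 ≠ 0 := pow_ne_zero 2 (norm_ne_zero_iff.2 (sub_ne_zero.2 (Ne.symm hne)))
  have hlim : Tendsto (fun r : ℝ => (1 - ‖I (r * ζ)‖ ^ 2) / ‖α - I (r * ζ)‖ ^ 2) (𝓝[<] 1)
      (𝓝 ((1 - ‖L‖ ^ 2) / ‖α - L‖ ^ 2)) :=
    (tendsto_const_nhds.sub (hL.norm.pow 2)).div ((tendsto_const_nhds.sub hL).norm.pow 2) hden
  rw [hL₁, one_pow, sub_self, zero_div] at hlim
  have hP : Tendsto (fun r : ℝ => poissonIntegral σ (r * ζ)) (𝓝[<] 1) (𝓝 0) :=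
    hlim.congr' ((eventually_ofReal_mul_mem_unitDisk hζ).mono fun r hr => (hσ _ hr).symm)
  linarith [ge_of_tendsto hP h]

end Clark

theorem radial_limit_eq_alpha_clark_ae_general (I Ib : ℂ → ℂ) (hI : IsInner I Ib)
    (α : ℂ) (σ : Measure ℂ) (hσ : IsClarkMeasure I α σ) :
    ∀ᵐ ζ ∂σ, HasRadialLimit I ζ α := by
  obtain ⟨_, hcircle, hpoisson⟩ := hσ
  obtain ⟨-, hmaps, hboundary⟩ := hI
  have hboundary' : ∀ᵐ ζ ∂σ, mCircle.rnDeriv σ ζ ≠ 0 →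
      HasRadialLimit I ζ (Ib ζ) ∧ ‖Ib ζ‖ = 1 :=
    (ae_withDensity_iff (Measure.measurable_rnDeriv _ _)).1
      ((Measure.withDensity_rnDeriv_le mCircle σ).absolutelyContinuous.ae_le hboundary)
  filter_upwards [Besicovitch.ae_tendsto_rnDeriv mCircle σ, Measure.rnDeriv_lt_top mCircle σ,
    hboundary', ae_iff.2 hcircle] with ζ hratio hfinite hinner hζ
  rcases eq_or_ne (mCircle.rnDeriv σ ζ) 0 with hzero | hpos
  · rw [hzero] at hratio
    exact hasRadialLimit_of_tendsto_poissonIntegral_atTop hmaps hpoisson hζ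
      (tendsto_poissonIntegral_atTop_of_ratio_tendsto_zero hcircle hζ hratio)
  · obtain ⟨hlim, hunit⟩ := hinner hpos
    obtain ⟨K, -, hK, -⟩ := ENNReal.lt_iff_exists_real_btwn.1 hfinite
    have hK₀ : 0 < K := ENNReal.ofReal_pos.1 (zero_le.trans_lt hK)
    have hle := eventually_le_poissonIntegral_of_ratio_lt hcircle hζ hK₀
      (hratio.eventually (gt_mem_nhds hK))
    rwa [← eq_of_hasRadialLimit_of_eventually_le_poissonIntegral hpoisson hζ hlim hunit
      (by positivity) hle]

/-- `I` has radial limit `α` at `σ_α`-almost every point of the circle. -/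
theorem radial_limit_eq_alpha_clark_ae (I Ib : ℂ → ℂ) (hI : IsInner I Ib)
    (α : ℂ) (hα : α ∈ unitCircle) (σ : Measure ℂ) (hσ : IsClarkMeasure I α σ) :
    ∀ᵐ ζ ∂σ, HasRadialLimit I ζ α :=
  radial_limit_eq_alpha_clark_ae_general I Ib hI α σ hσ
end
end

section
/- Let I : 𝔻 → 𝔻 be an inner function and for α ∈ 𝕋 let σ_α be its Clark measure. Then the family {σ_α} disintegrates Lebesgue measure: for every continuous function g on 𝕋, one has ∫_𝕋 (∫_𝕋 g dσ_α) dm(α) = ∫_𝕋 g dm, where m is normalized Lebesgue measure on 𝕋. -/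
open MeasureTheory Complex Filter Real Set

noncomputable section

/-! Write `P(w, ζ) = (1 - ‖w‖²) / ‖ζ - w‖²` and `P_r[g](ζ) = ∫ P(rζ, ξ) g(ξ) dm(ξ)`. The symmetry
`P(rζ, ξ) = P(rξ, ζ)` on the circle and the defining property of `σ_α` give, by Fubini,
`∫ P_r[g] dσ_α = ∫ g(ξ) P(I(rξ), α) dm(ξ)`; integrating in `α` and using `∫ P(w, ·) dm = 1`
returns `∫ g dm` for every `r < 1`. As `r → 1⁻`, `P_r[g] → g` uniformly on the circle, and the
masses `σ_α(𝕋) = P(I(0), α)` are bounded uniformly in `α`, so `∫ P_r[g] dσ_α → ∫ g dσ_α`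
uniformly in `α`. Hence `α ↦ ∫ g dσ_α` is continuous and the identity passes to the limit. -/

open Topology

section ConcentratedMeasures

variable {X E : Type*} [MeasurableSpace X] [NormedAddCommGroup E] {μ : Measure X} {K : Set X}

theorem ContinuousOn.integrable_of_isCompact_of_ae_mem [TopologicalSpace X]
    [OpensMeasurableSpace X] [T2Space X] [IsFiniteMeasure μ] {f : X → E}
    (hf : ContinuousOn f K) (hK : IsCompact K) (hμK : ∀ᵐ x ∂μ, x ∈ K) : Integrable f μ := by
  rw [← Measure.restrict_eq_self_of_ae_mem hμK]
  exact hf.integrableOn_compact hK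

theorem ae_mem_prod_of_ae_mem {Y : Type*} [MeasurableSpace Y] {ν : Measure Y} {L : Set Y}
    (hμK : ∀ᵐ x ∂μ, x ∈ K) (hνL : ∀ᵐ y ∂ν, y ∈ L) : ∀ᵐ p ∂μ.prod ν, p ∈ K ×ˢ L := by
  filter_upwards [Measure.quasiMeasurePreserving_fst.ae hμK,
    Measure.quasiMeasurePreserving_snd.ae hνL] with p hp₁ hp₂ using ⟨hp₁, hp₂⟩

theorem continuousOn_integral_of_continuousOn_prod [TopologicalSpace X]
    [OpensMeasurableSpace X] [T2Space X] {Y : Type*} [TopologicalSpace Y]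
    [FirstCountableTopology Y] [NormedSpace ℝ E] [IsFiniteMeasure μ] {s : Set Y} {F : Y → X → E}
    (hF : ContinuousOn (Function.uncurry F) (s ×ˢ K)) (hs : IsCompact s) (hK : IsCompact K)
    (hμK : ∀ᵐ x ∂μ, x ∈ K) : ContinuousOn (fun y => ∫ x, F y x ∂μ) s := by
  obtain ⟨C, hC⟩ := (hs.prod hK).exists_bound_of_continuousOn hF
  have hFy : ∀ y ∈ s, ContinuousOn (F y) K := fun y hy =>
    hF.comp (continuousOn_const.prodMk continuousOn_id) fun x hx => ⟨hy, hx⟩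
  refine continuousOn_of_dominated (bound := fun _ => C) (fun y hy => ?_) (fun y hy => ?_)
    (integrable_const C) ?_
  · exact ((hFy y hy).integrable_of_isCompact_of_ae_mem hK hμK).aestronglyMeasurable
  · filter_upwards [hμK] with x hx using hC (y, x) ⟨hy, hx⟩
  · filter_upwards [hμK] with x hx
    exact hF.comp (continuousOn_id.prodMk continuousOn_const) fun y hy => ⟨hy, hx⟩

theorem dist_integral_le_of_forall_dist_le [NormedSpace ℝ E] [IsFiniteMeasure μ] {f g : X → E}
    {ε : ℝ} (hf : Integrable f μ) (hg : Integrable g μ) (hμK : ∀ᵐ x ∂μ, x ∈ K)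
    (hfg : ∀ x ∈ K, dist (f x) (g x) ≤ ε) :
    dist (∫ x, f x ∂μ) (∫ x, g x ∂μ) ≤ ε * μ.real univ := by
  rw [dist_eq_norm, ← integral_sub hf hg]
  refine norm_integral_le_of_norm_le_const ?_
  filter_upwards [hμK] with x hx
  simpa [dist_eq_norm] using hfg x hx

theorem tendstoUniformlyOn_integral_of_measureReal_univ_le [NormedSpace ℝ E] {ι α : Type*}
    {ν : ι → Measure X} {s : Set ι} {C : ℝ} (hν : ∀ i ∈ s, IsFiniteMeasure (ν i))
    (hνK : ∀ i ∈ s, ∀ᵐ x ∂ν i, x ∈ K) (hνC : ∀ i ∈ s, (ν i).real univ ≤ C)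
    {F : α → X → E} {f : X → E} {l : Filter α} (hFf : TendstoUniformlyOn F f l K)
    (hF : ∀ᶠ a in l, ∀ i ∈ s, Integrable (F a) (ν i)) (hf : ∀ i ∈ s, Integrable f (ν i)) :
    TendstoUniformlyOn (fun a i => ∫ x, F a x ∂ν i) (fun i => ∫ x, f x ∂ν i) l s := by
  rw [Metric.tendstoUniformlyOn_iff] at hFf ⊢
  intro ε hε
  filter_upwards [hFf (ε / (|C| + 1)) (by positivity), hF] with a hFa hint i hi
  have := hν i hi
  calc dist (∫ x, f x ∂ν i) (∫ x, F a x ∂ν i) ≤ ε / (|C| + 1) * (ν i).real univ :=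
        dist_integral_le_of_forall_dist_le (hf i hi) (hint i hi) (hνK i hi)
          fun x hx => (hFa x hx).le
    _ ≤ ε / (|C| + 1) * |C| := by gcongr; exact (hνC i hi).trans (le_abs_self C)
    _ < ε := by
        rw [div_mul_eq_mul_div, div_lt_iff₀ (by positivity)]
        nlinarith [abs_nonneg C]

end ConcentratedMeasures

theorem isCompact_unitCircle : IsCompact unitCircle := by
  simpa [unitCircle, Metric.sphere, dist_eq_norm] using isCompact_sphere (0 : ℂ) 1

theorem ne_of_mem_unitCircle_of_norm_lt_one {ζ w : ℂ} (hζ : ζ ∈ unitCircle) (hw : ‖w‖ < 1) :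
    ζ ≠ w := by
  rintro rfl
  exact hw.ne hζ

theorem norm_ofReal_mul_of_mem_unitCircle {ζ : ℂ} (hζ : ζ ∈ unitCircle) (r : ℝ) :
    ‖(r : ℂ) * ζ‖ = |r| := by
  simp [hζ.out]

theorem mapsTo_ofReal_mul_unitCircle_unitDisk {r : ℝ} (hr : |r| < 1) :
    MapsTo (fun ξ => (r : ℂ) * ξ) unitCircle unitDisk := fun ξ hξ => by
  show ‖(r : ℂ) * ξ‖ < 1
  rwa [norm_ofReal_mul_of_mem_unitCircle hξ]

theorem measurable_exp_ofReal_mul_I : Measurable fun θ : ℝ => Complex.exp (θ * Complex.I) := by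
  fun_prop

instance isProbabilityMeasure_mCircle : IsProbabilityMeasure mCircle := by
  constructor
  rw [mCircle, Measure.smul_apply, Measure.map_apply measurable_exp_ofReal_mul_I .univ]
  simp only [preimage_univ, Measure.restrict_apply .univ, univ_inter, Real.volume_Ioc,
    sub_zero, smul_eq_mul]
  exact ENNReal.inv_mul_cancel (by simp [Real.pi_pos]) ENNReal.ofReal_ne_top

theorem ae_mem_unitCircle_mCircle : ∀ᵐ ζ ∂mCircle, ζ ∈ unitCircle := by
  change mCircle unitCircleᶜ = 0
  rw [mCircle, Measure.smul_apply, Measure.map_apply measurable_exp_ofReal_mul_I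
    (isCompact_unitCircle.isClosed.measurableSet.compl)]
  simp [unitCircle, Complex.norm_exp_ofReal_mul_I]

theorem integral_mCircle_eq_circleAverage {E : Type*} [NormedAddCommGroup E] [NormedSpace ℝ E]
    {f : ℂ → E} (hf : StronglyMeasurable f) :
    ∫ ζ, f ζ ∂mCircle = Real.circleAverage f 0 1 := by
  rw [mCircle, integral_smul_measure,
    integral_map_of_stronglyMeasurable measurable_exp_ofReal_mul_I hf, Real.circleAverage,
    intervalIntegral.integral_of_le Real.two_pi_pos.le, ENNReal.toReal_inv,
    ENNReal.toReal_ofReal Real.two_pi_pos.le]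
  simp [circleMap]

theorem poissonKernel_zero_of_norm_eq_one {w ζ : ℂ} (hζ : ‖ζ‖ = 1) :
    poissonKernel 0 w ζ = (1 - ‖w‖ ^ 2) / ‖ζ - w‖ ^ 2 := by
  simp [poissonKernel, hζ]

theorem poissonKernel_nonneg {w ζ : ℂ} (hw : ‖w‖ < 1) (hζ : ‖ζ‖ = 1) :
    0 ≤ poissonKernel 0 w ζ := by
  rw [poissonKernel_zero_of_norm_eq_one hζ]
  have : ‖w‖ ^ 2 < 1 := by nlinarith [norm_nonneg w]
  exact div_nonneg (by linarith) (sq_nonneg _)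

theorem poissonKernel_le {w ζ : ℂ} (hw : ‖w‖ < 1) (hζ : ‖ζ‖ = 1) :
    poissonKernel 0 w ζ ≤ (1 + ‖w‖) / (1 - ‖w‖) := by
  simpa [poissonKernel_eq_re_herglotzRieszKernel, herglotzRieszKernel] using
    re_herglotzRieszKernel_le (c := 0) (R := 1) (z := ζ) (w := w) (by simpa using hζ)
      (by simpa using hw)

theorem poissonKernel_le_of_le_norm_sub {w ζ : ℂ} {d : ℝ} (hw : ‖w‖ < 1) (hζ : ‖ζ‖ = 1)
    (hd : 0 < d) (hdζ : d ≤ ‖ζ - w‖) : poissonKernel 0 w ζ ≤ (1 - ‖w‖ ^ 2) / d ^ 2 := by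
  rw [poissonKernel_zero_of_norm_eq_one hζ]
  have : ‖w‖ ^ 2 < 1 := by nlinarith [norm_nonneg w]
  gcongr

theorem norm_sub_ofReal_mul_comm {ζ ξ : ℂ} (hζ : ‖ζ‖ = 1) (hξ : ‖ξ‖ = 1) (r : ℝ) :
    ‖ξ - r * ζ‖ = ‖ζ - r * ξ‖ := by
  have hζ' : ζ * starRingEnd ℂ ζ = 1 := by simp [Complex.mul_conj, Complex.normSq_eq_norm_sq, hζ]
  have hξ' : ξ * starRingEnd ℂ ξ = 1 := by simp [Complex.mul_conj, Complex.normSq_eq_norm_sq, hξ]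
  have : ξ - r * ζ = ξ * ζ * starRingEnd ℂ (ζ - r * ξ) := by
    simp only [map_sub, map_mul, Complex.conj_ofReal]
    linear_combination (-ξ) * hζ' + r * ζ * hξ'
  rw [this, norm_mul, norm_mul, Complex.norm_conj, hζ, hξ, one_mul, one_mul]

theorem poissonKernel_ofReal_mul_comm {ζ ξ : ℂ} (hζ : ‖ζ‖ = 1) (hξ : ‖ξ‖ = 1) (r : ℝ) :
    poissonKernel 0 (r * ζ) ξ = poissonKernel 0 (r * ξ) ζ := by
  simp [poissonKernel, hζ, hξ, norm_sub_ofReal_mul_comm hζ hξ r]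

theorem ContinuousOn.poissonKernel {X : Type*} [TopologicalSpace X] {w ζ : X → ℂ} {s : Set X}
    (hw : ContinuousOn w s) (hζ : ContinuousOn ζ s) (hne : ∀ x ∈ s, ζ x ≠ w x) :
    ContinuousOn (fun x => _root_.poissonKernel 0 (w x) (ζ x)) s := by
  refine ContinuousOn.div (by fun_prop) (by fun_prop) fun x hx => ?_
  simpa [sub_eq_zero] using hne x hx

theorem integral_poissonKernel_mCircle {w : ℂ} (hw : ‖w‖ < 1) :
    ∫ ζ, poissonKernel 0 w ζ ∂mCircle = 1 := by
  have hmeas : StronglyMeasurable (poissonKernel 0 w) := by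
    unfold poissonKernel; fun_prop
  rw [integral_mCircle_eq_circleAverage hmeas]
  simpa [Pi.mul_def] using InnerProductSpace.HarmonicContOnCl.circleAverage_poissonKernel_smul
    (InnerProductSpace.harmonicContOnCl_const (c := (1 : ℝ))) (c := 0) (R := 1) (by simpa using hw)

theorem continuousOn_poissonKernel_unitCircle {w : ℂ} (hw : ‖w‖ < 1) :
    ContinuousOn (poissonKernel 0 w) unitCircle :=
  continuousOn_const.poissonKernel continuousOn_id fun _ hζ =>
    ne_of_mem_unitCircle_of_norm_lt_one hζ hw

def poissonExtension (g : ℂ → ℝ) (w : ℂ) : ℝ :=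
  ∫ ξ, poissonKernel 0 w ξ * g ξ ∂mCircle

theorem poissonKernel_mul_abs_sub_le {g : ℂ → ℝ} {M δ ε : ℝ}
    (hM : ∀ ξ ∈ unitCircle, |g ξ| ≤ M) (hδ : 0 < δ) (hε : 0 ≤ ε) {ζ ξ w : ℂ}
    (hζ : ζ ∈ unitCircle) (hξ : ξ ∈ unitCircle) (hgξ : ‖ξ - ζ‖ < δ → |g ξ - g ζ| ≤ ε)
    (hw : ‖w‖ < 1) (hwζ : ‖ζ - w‖ ≤ δ / 2) :
    poissonKernel 0 w ξ * |g ξ - g ζ| ≤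
      ε * poissonKernel 0 w ξ + 8 * M * (1 - ‖w‖ ^ 2) / δ ^ 2 := by
  have hP0 := poissonKernel_nonneg hw hξ
  rcases lt_or_ge ‖ξ - ζ‖ δ with hnear | hfar
  · have : ‖w‖ ^ 2 < 1 := by nlinarith [norm_nonneg w]
    have : 0 ≤ M := (abs_nonneg _).trans (hM ζ hζ)
    have : 0 ≤ 8 * M * (1 - ‖w‖ ^ 2) / δ ^ 2 := by positivity
    nlinarith [mul_le_mul_of_nonneg_left (hgξ hnear) hP0]
  -- far from `ζ` the kernel is `O(1 - ‖w‖²)`, since `w` is within `δ / 2` of `ζ`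
  · have hd : δ / 2 ≤ ‖ξ - w‖ := by
      have := norm_sub_le_norm_sub_add_norm_sub ξ w ζ
      rw [norm_sub_rev w ζ] at this
      linarith
    have hPle := poissonKernel_le_of_le_norm_sub hw hξ (half_pos hδ) hd
    have hg2 : |g ξ - g ζ| ≤ 2 * M := by
      linarith [abs_sub (g ξ) (g ζ), hM ξ hξ, hM ζ hζ]
    calc poissonKernel 0 w ξ * |g ξ - g ζ| ≤ (1 - ‖w‖ ^ 2) / (δ / 2) ^ 2 * (2 * M) :=
          mul_le_mul hPle hg2 (abs_nonneg _) (hP0.trans hPle)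
      _ = 8 * M * (1 - ‖w‖ ^ 2) / δ ^ 2 := by field_simp; ring
      _ ≤ ε * poissonKernel 0 w ξ + 8 * M * (1 - ‖w‖ ^ 2) / δ ^ 2 := by nlinarith

theorem abs_poissonExtension_sub_le {g : ℂ → ℝ} (hg : ContinuousOn g unitCircle) {M δ ε : ℝ}
    (hM : ∀ ξ ∈ unitCircle, |g ξ| ≤ M) (hδ : 0 < δ) {ζ w : ℂ} (hζ : ζ ∈ unitCircle)
    (hgζ : ∀ ξ ∈ unitCircle, ‖ξ - ζ‖ < δ → |g ξ - g ζ| ≤ ε) (hw : ‖w‖ < 1)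
    (hwζ : ‖ζ - w‖ ≤ δ / 2) :
    |poissonExtension g w - g ζ| ≤ ε + 8 * M * (1 - ‖w‖ ^ 2) / δ ^ 2 := by
  set A := 8 * M * (1 - ‖w‖ ^ 2) / δ ^ 2
  have hε : 0 ≤ ε := by simpa using hgζ ζ hζ (by simpa using hδ)
  have hP := continuousOn_poissonKernel_unitCircle hw
  have hPint := hP.integrable_of_isCompact_of_ae_mem isCompact_unitCircle ae_mem_unitCircle_mCircle
  have hPgint : Integrable (fun ξ => poissonKernel 0 w ξ * g ξ) mCircle :=
    (hP.mul hg).integrable_of_isCompact_of_ae_mem isCompact_unitCircle ae_mem_unitCircle_mCircle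
  calc |poissonExtension g w - g ζ| = ‖∫ ξ, poissonKernel 0 w ξ * (g ξ - g ζ) ∂mCircle‖ := by
        simp_rw [mul_sub]
        rw [integral_sub hPgint (hPint.mul_const _), integral_mul_const,
          integral_poissonKernel_mCircle hw, one_mul, Real.norm_eq_abs, poissonExtension]
    _ ≤ ∫ ξ, (ε * poissonKernel 0 w ξ + A) ∂mCircle := by
        refine norm_integral_le_of_norm_le ((hPint.const_mul ε).add (integrable_const A)) ?_
        filter_upwards [ae_mem_unitCircle_mCircle] with ξ hξ
        rw [Real.norm_eq_abs, abs_mul, abs_of_nonneg (poissonKernel_nonneg hw hξ)]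
        exact poissonKernel_mul_abs_sub_le hM hδ hε hζ hξ (hgζ ξ hξ) hw hwζ
    _ = ε + A := by
        rw [integral_add (hPint.const_mul ε) (integrable_const A), integral_const_mul,
          integral_poissonKernel_mCircle hw]
        simp

theorem tendstoUniformlyOn_poissonExtension {g : ℂ → ℝ} (hg : ContinuousOn g unitCircle) :
    TendstoUniformlyOn (fun (r : ℝ) ζ => poissonExtension g (r * ζ)) g (𝓝[<] 1)
      unitCircle := by
  rw [Metric.tendstoUniformlyOn_iff]
  intro ε hε
  obtain ⟨M, hM⟩ := isCompact_unitCircle.exists_bound_of_continuousOn hg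
  obtain ⟨δ, hδ, hgδ⟩ := Metric.uniformContinuousOn_iff.1
    (isCompact_unitCircle.uniformContinuousOn_of_continuous hg) (ε / 2) (half_pos hε)
  have hsmall : ∀ᶠ r in 𝓝[<] (1 : ℝ), 8 * M * (1 - r ^ 2) / δ ^ 2 < ε / 2 := by
    have : Tendsto (fun r : ℝ => 8 * M * (1 - r ^ 2) / δ ^ 2) (𝓝 1) (𝓝 0) :=
      (by fun_prop : Continuous fun r : ℝ => 8 * M * (1 - r ^ 2) / δ ^ 2).tendsto' 1 0
        (by simp)
    exact nhdsWithin_le_nhds (this.eventually (gt_mem_nhds (half_pos hε)))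
  have hδ' : max 0 (1 - δ / 2) < 1 := max_lt one_pos (by linarith)
  filter_upwards [hsmall, Ioo_mem_nhdsLT hδ'] with r hr ⟨hr0, hr1⟩ ζ hζ
  rw [max_lt_iff] at hr0
  have hrζ : ‖(r : ℂ) * ζ‖ = r := by
    rw [norm_ofReal_mul_of_mem_unitCircle hζ, abs_of_pos hr0.1]
  have hζrζ : ‖ζ - r * ζ‖ = 1 - r := by
    rw [show ζ - r * ζ = ((1 - r : ℝ) : ℂ) * ζ by push_cast; ring,
      norm_ofReal_mul_of_mem_unitCircle hζ, abs_of_pos (by linarith)]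
  have hgζ : ∀ ξ ∈ unitCircle, ‖ξ - ζ‖ < δ → |g ξ - g ζ| ≤ ε / 2 := fun ξ hξ h => by
    rw [← Real.dist_eq]
    exact (hgδ ξ hξ ζ hζ (by rwa [dist_eq_norm])).le
  have := abs_poissonExtension_sub_le hg hM hδ hζ hgζ (hrζ ▸ hr1) (by linarith)
  rw [hrζ] at this
  rw [dist_comm, Real.dist_eq]
  linarith

theorem continuousOn_poissonKernel_ofReal_mul_mul {g : ℂ → ℝ} (hg : ContinuousOn g unitCircle)
    {r : ℝ} (hr : |r| < 1) :
    ContinuousOn (fun p : ℂ × ℂ => poissonKernel 0 (r * p.1) p.2 * g p.2)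
      (unitCircle ×ˢ unitCircle) := by
  refine ContinuousOn.mul ?_ (hg.comp continuousOn_snd fun p hp => hp.2)
  exact ContinuousOn.poissonKernel (by fun_prop) continuousOn_snd fun p hp =>
    ne_of_mem_unitCircle_of_norm_lt_one hp.2 (mapsTo_ofReal_mul_unitCircle_unitDisk hr hp.1)

theorem continuousOn_poissonExtension_ofReal_mul {g : ℂ → ℝ} (hg : ContinuousOn g unitCircle)
    {r : ℝ} (hr : |r| < 1) : ContinuousOn (fun ζ => poissonExtension g (r * ζ)) unitCircle :=
  continuousOn_integral_of_continuousOn_prod (F := fun ζ ξ => poissonKernel 0 (r * ζ) ξ * g ξ)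
    (continuousOn_poissonKernel_ofReal_mul_mul hg hr) isCompact_unitCircle isCompact_unitCircle
    ae_mem_unitCircle_mCircle

section

variable {g : ℂ → ℝ} {ψ : ℂ → ℂ}

theorem continuousOn_mul_poissonKernel_comp (hg : ContinuousOn g unitCircle)
    (hψ : ContinuousOn ψ unitCircle) (hψD : MapsTo ψ unitCircle unitDisk) :
    ContinuousOn (fun p : ℂ × ℂ => g p.2 * poissonKernel 0 (ψ p.2) p.1)
      (unitCircle ×ˢ unitCircle) := by
  refine (hg.comp continuousOn_snd fun p hp => hp.2).mul ?_
  exact ContinuousOn.poissonKernel (hψ.comp continuousOn_snd fun p hp => hp.2) continuousOn_fst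
    fun p hp => ne_of_mem_unitCircle_of_norm_lt_one hp.1 (hψD hp.2)

theorem continuousOn_integral_mul_poissonKernel_comp (hg : ContinuousOn g unitCircle)
    (hψ : ContinuousOn ψ unitCircle) (hψD : MapsTo ψ unitCircle unitDisk) :
    ContinuousOn (fun α => ∫ ξ, g ξ * poissonKernel 0 (ψ ξ) α ∂mCircle) unitCircle :=
  continuousOn_integral_of_continuousOn_prod (F := fun α ξ => g ξ * poissonKernel 0 (ψ ξ) α)
    (continuousOn_mul_poissonKernel_comp hg hψ hψD) isCompact_unitCircle isCompact_unitCircle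
    ae_mem_unitCircle_mCircle

theorem integral_integral_mul_poissonKernel_comp (hg : ContinuousOn g unitCircle)
    (hψ : ContinuousOn ψ unitCircle) (hψD : MapsTo ψ unitCircle unitDisk) :
    ∫ α, ∫ ξ, g ξ * poissonKernel 0 (ψ ξ) α ∂mCircle ∂mCircle = ∫ ξ, g ξ ∂mCircle := by
  have hint := (continuousOn_mul_poissonKernel_comp hg hψ hψD).integrable_of_isCompact_of_ae_mem
    (isCompact_unitCircle.prod isCompact_unitCircle)
    (ae_mem_prod_of_ae_mem ae_mem_unitCircle_mCircle ae_mem_unitCircle_mCircle)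
    (μ := mCircle.prod mCircle)
  rw [integral_integral_swap hint]
  refine integral_congr_ae ?_
  filter_upwards [ae_mem_unitCircle_mCircle] with ξ hξ
  rw [integral_const_mul, integral_poissonKernel_mCircle (hψD hξ), mul_one]

end

theorem poissonIntegral_eq_integral_poissonKernel {μ : Measure ℂ}
    (hμ : ∀ᵐ ζ ∂μ, ζ ∈ unitCircle) (z : ℂ) :
    poissonIntegral μ z = ∫ ζ, poissonKernel 0 z ζ ∂μ :=
  integral_congr_ae <| by
    filter_upwards [hμ] with ζ hζ using (poissonKernel_zero_of_norm_eq_one hζ).symm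

namespace IsClarkMeasure

variable {φ : ℂ → ℂ} {α : ℂ} {σ : Measure ℂ}

theorem ae_mem_unitCircle (h : IsClarkMeasure φ α σ) : ∀ᵐ ζ ∂σ, ζ ∈ unitCircle :=
  h.2.1

theorem integral_poissonKernel (h : IsClarkMeasure φ α σ) (hα : α ∈ unitCircle) {z : ℂ}
    (hz : z ∈ unitDisk) : ∫ ζ, poissonKernel 0 z ζ ∂σ = poissonKernel 0 (φ z) α := by
  rw [← poissonIntegral_eq_integral_poissonKernel h.ae_mem_unitCircle, h.2.2 z hz,
    poissonKernel_zero_of_norm_eq_one hα]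

theorem measureReal_univ_le (h : IsClarkMeasure φ α σ) (hα : α ∈ unitCircle)
    (h0 : φ 0 ∈ unitDisk) : σ.real univ ≤ (1 + ‖φ 0‖) / (1 - ‖φ 0‖) := by
  have := h.1
  calc σ.real univ = ∫ ζ, poissonKernel 0 0 ζ ∂σ := by
        rw [integral_congr_ae (g := fun _ => (1 : ℝ)), integral_const, smul_eq_mul, mul_one]
        filter_upwards [h.ae_mem_unitCircle] with ζ hζ
        simp [poissonKernel_zero_of_norm_eq_one hζ, hζ.out]
    _ = poissonKernel 0 (φ 0) α := h.integral_poissonKernel hα (by simp [unitDisk])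
    _ ≤ (1 + ‖φ 0‖) / (1 - ‖φ 0‖) := poissonKernel_le h0 hα

theorem integral_poissonExtension (h : IsClarkMeasure φ α σ) (hα : α ∈ unitCircle)
    {g : ℂ → ℝ} (hg : ContinuousOn g unitCircle) {r : ℝ} (hr : |r| < 1) :
    ∫ ζ, poissonExtension g (r * ζ) ∂σ =
      ∫ ξ, g ξ * poissonKernel 0 (φ (r * ξ)) α ∂mCircle := by
  have := h.1
  have hint := (continuousOn_poissonKernel_ofReal_mul_mul hg hr).integrable_of_isCompact_of_ae_mem
    (isCompact_unitCircle.prod isCompact_unitCircle)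
    (ae_mem_prod_of_ae_mem h.ae_mem_unitCircle ae_mem_unitCircle_mCircle) (μ := σ.prod mCircle)
  simp only [poissonExtension]
  rw [integral_integral_swap hint]
  refine integral_congr_ae ?_
  filter_upwards [ae_mem_unitCircle_mCircle] with ξ hξ
  rw [integral_mul_const, mul_comm]
  congr 1
  calc ∫ ζ, poissonKernel 0 (r * ζ) ξ ∂σ = ∫ ζ, poissonKernel 0 (r * ξ) ζ ∂σ :=
        integral_congr_ae <| by
          filter_upwards [h.ae_mem_unitCircle] with ζ hζ
          exact poissonKernel_ofReal_mul_comm hζ hξ r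
    _ = poissonKernel 0 (φ (r * ξ)) α :=
        h.integral_poissonKernel hα (mapsTo_ofReal_mul_unitCircle_unitDisk hr hξ)

end IsClarkMeasure

theorem eventually_abs_lt_one_nhdsLT_one : ∀ᶠ r in 𝓝[<] (1 : ℝ), |r| < 1 := by
  filter_upwards [Ioo_mem_nhdsLT (neg_lt_self one_pos)] with r hr using abs_lt.2 hr

theorem tendstoUniformlyOn_integral_clarkMeasure {φ : ℂ → ℂ} (hφ : MapsTo φ unitDisk unitDisk)
    {σ : ℂ → Measure ℂ} (hσ : ∀ α ∈ unitCircle, IsClarkMeasure φ α (σ α)) {g : ℂ → ℝ}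
    (hg : ContinuousOn g unitCircle) :
    TendstoUniformlyOn (fun (r : ℝ) α => ∫ ξ, g ξ * poissonKernel 0 (φ (r * ξ)) α ∂mCircle)
      (fun α => ∫ ζ, g ζ ∂σ α) (𝓝[<] 1) unitCircle := by
  refine (tendstoUniformlyOn_integral_of_measureReal_univ_le (fun α hα => (hσ α hα).1)
    (fun α hα => (hσ α hα).ae_mem_unitCircle)
    (fun α hα => (hσ α hα).measureReal_univ_le hα (hφ (by simp [unitDisk])))
    (tendstoUniformlyOn_poissonExtension hg) ?_ ?_).congr ?_
  · filter_upwards [eventually_abs_lt_one_nhdsLT_one] with r hr α hα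
    have := (hσ α hα).1
    exact (continuousOn_poissonExtension_ofReal_mul hg hr).integrable_of_isCompact_of_ae_mem
      isCompact_unitCircle (hσ α hα).ae_mem_unitCircle
  · intro α hα
    have := (hσ α hα).1
    exact hg.integrable_of_isCompact_of_ae_mem isCompact_unitCircle (hσ α hα).ae_mem_unitCircle
  · filter_upwards [eventually_abs_lt_one_nhdsLT_one] with r hr α hα using
      (hσ α hα).integral_poissonExtension hα hg hr

theorem integral_integral_clarkMeasure {φ : ℂ → ℂ} (hφc : ContinuousOn φ unitDisk)
    (hφ : MapsTo φ unitDisk unitDisk) {σ : ℂ → Measure ℂ}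
    (hσ : ∀ α ∈ unitCircle, IsClarkMeasure φ α (σ α)) {g : ℂ → ℝ}
    (hg : ContinuousOn g unitCircle) :
    ∫ α, ∫ ζ, g ζ ∂σ α ∂mCircle = ∫ ζ, g ζ ∂mCircle := by
  set G : ℝ → ℂ → ℝ := fun r α => ∫ ξ, g ξ * poissonKernel 0 (φ (r * ξ)) α ∂mCircle
  have hψ {r : ℝ} (hr : |r| < 1) : ContinuousOn (fun ξ => φ (r * ξ)) unitCircle :=
    hφc.comp (by fun_prop) (mapsTo_ofReal_mul_unitCircle_unitDisk hr)
  have hψD {r : ℝ} (hr : |r| < 1) : MapsTo (fun ξ => φ (r * ξ)) unitCircle unitDisk :=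
    hφ.comp (mapsTo_ofReal_mul_unitCircle_unitDisk hr)
  have hG {r : ℝ} (hr : |r| < 1) : ContinuousOn (G r) unitCircle :=
    continuousOn_integral_mul_poissonKernel_comp hg (hψ hr) (hψD hr)
  have hlim := tendstoUniformlyOn_integral_clarkMeasure hφ hσ hg
  have hΦ : ContinuousOn (fun α => ∫ ζ, g ζ ∂σ α) unitCircle :=
    hlim.continuousOn (eventually_abs_lt_one_nhdsLT_one.mono fun r => hG).frequently
  refine eq_of_forall_dist_le fun ε hε => ?_
  obtain ⟨r, hclose, hr⟩ :=
    ((Metric.tendstoUniformlyOn_iff.1 hlim ε hε).and eventually_abs_lt_one_nhdsLT_one).exists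
  calc dist (∫ α, ∫ ζ, g ζ ∂σ α ∂mCircle) (∫ ζ, g ζ ∂mCircle)
      = dist (∫ α, ∫ ζ, g ζ ∂σ α ∂mCircle) (∫ α, G r α ∂mCircle) := by
        rw [integral_integral_mul_poissonKernel_comp hg (hψ hr) (hψD hr)]
    _ ≤ ε * mCircle.real univ :=
        dist_integral_le_of_forall_dist_le
          (hΦ.integrable_of_isCompact_of_ae_mem isCompact_unitCircle ae_mem_unitCircle_mCircle)
          ((hG hr).integrable_of_isCompact_of_ae_mem isCompact_unitCircle
            ae_mem_unitCircle_mCircle)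
          ae_mem_unitCircle_mCircle fun α hα => (hclose α hα).le
    _ = ε := by simp

/-- Aleksandrov disintegration of Lebesgue measure by Clark measures. -/
theorem aleksandrov_disintegration (I Ib : ℂ → ℂ) (hI : IsInner I Ib)
    (σ : ℂ → Measure ℂ) (hσ : ∀ α ∈ unitCircle, IsClarkMeasure I α (σ α)) :
    ∀ g : ℂ → ℝ, Continuous g →
      ∫ α, (∫ ζ, g ζ ∂(σ α)) ∂mCircle = ∫ ζ, g ζ ∂mCircle :=
  fun _ hg => integral_integral_clarkMeasure hI.1.continuousOn hI.2.1 hσ hg.continuousOn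
end
end

section
/- Let I : 𝔻 → 𝔻 be an inner function, α ∈ 𝕋, and σ_α its Clark measure. Then for all z, w ∈ 𝔻, ∫_𝕋 (1/(1 - z·conj(ζ))) · (1/(1 - ζ·conj(w))) dσ_α(ζ) = ((1 - I(z)·conj(I(w))) / ((1 - conj(α)·I(z))(1 - α·conj(I(w))))) · (1/(1 - z·conj(w))). -/
/-
On the circle, `A = 1 - z ζ̄` and `B = 1 - ζ w̄` satisfy `A + B - A B = 1 - z w̄`, so the double
integral is `(1 - z w̄)⁻¹ (F z + conj (F w) - σ(𝕋))` for the Cauchy transform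
`F z = ∫ (1 - z ζ̄)⁻¹ dσ`. The real part of `2 F - σ(𝕋)` is the Poisson integral of `σ`, which by
the defining property of the Clark measure is the real part of the holomorphic function
`(α + I) / (α - I)`. Holomorphic functions with equal real parts on the disk differ by an imaginary
constant, and that constant cancels in `F z + conj (F w)`.
-/

open MeasureTheory Complex Filter Real Set

noncomputable section

open ComplexConjugate

lemma one_sub_norm_le_norm_one_sub_mul_conj {z ζ : ℂ} (hζ : ‖ζ‖ ≤ 1) :
    1 - ‖z‖ ≤ ‖1 - z * conj ζ‖ := by
  calc 1 - ‖z‖ ≤ 1 - ‖z * conj ζ‖ := by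
        rw [norm_mul, Complex.norm_conj]
        nlinarith [norm_nonneg z]
    _ ≤ ‖1 - z * conj ζ‖ := by simpa using norm_sub_norm_le (1 : ℂ) (z * conj ζ)

lemma one_sub_mul_conj_ne_zero {z ζ : ℂ} (hz : ‖z‖ < 1) (hζ : ‖ζ‖ ≤ 1) : 1 - z * conj ζ ≠ 0 :=
  norm_pos_iff.mp ((sub_pos.mpr hz).trans_le (one_sub_norm_le_norm_one_sub_mul_conj hζ))

lemma conj_inv_one_sub_mul_conj (w ζ : ℂ) : conj (1 - w * conj ζ)⁻¹ = (1 - ζ * conj w)⁻¹ := by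
  simp [mul_comm]

lemma two_mul_re_inv_one_sub_mul_conj_sub_one {z ζ : ℂ} (hζ : ‖ζ‖ = 1) (hz : z ≠ ζ) :
    2 * ((1 - z * conj ζ)⁻¹).re - 1 = (1 - ‖z‖ ^ 2) / ‖ζ - z‖ ^ 2 := by
  have hζζ : Complex.normSq ζ = 1 := by rw [Complex.normSq_eq_norm_sq, hζ]; norm_num
  have hne : ‖ζ - z‖ ≠ 0 := norm_ne_zero_iff.mpr (sub_ne_zero.mpr (Ne.symm hz))
  have hnormSq : Complex.normSq (1 - z * conj ζ) = ‖ζ - z‖ ^ 2 := by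
    have hfac : 1 - z * conj ζ = conj ζ * (ζ - z) := by
      have : conj ζ * ζ = 1 := by
        rw [← Complex.normSq_eq_conj_mul_self, hζζ, Complex.ofReal_one]
      linear_combination -this
    rw [hfac, Complex.normSq_mul, Complex.normSq_conj, hζζ, one_mul, Complex.normSq_eq_norm_sq]
  rw [Complex.inv_re, hnormSq]
  field_simp
  rw [← Complex.normSq_eq_norm_sq, ← Complex.normSq_eq_norm_sq]
  rw [Complex.normSq_apply] at hζζ
  simp only [Complex.normSq_apply, Complex.sub_re, Complex.sub_im, Complex.one_re,
    Complex.mul_re, Complex.conj_re, Complex.conj_im]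
  linear_combination (-1) * hζζ

lemma re_add_div_sub {α u : ℂ} (hα : ‖α‖ = 1) :
    ((α + u) / (α - u)).re = (1 - ‖u‖ ^ 2) / ‖α - u‖ ^ 2 := by
  have hαα : Complex.normSq α = 1 := by rw [Complex.normSq_eq_norm_sq, hα]; norm_num
  rw [Complex.div_re, ← add_div, ← Complex.normSq_eq_norm_sq, ← Complex.normSq_eq_norm_sq]
  congr 1
  rw [Complex.normSq_apply] at hαα
  simp only [Complex.normSq_apply, Complex.add_re, Complex.sub_re, Complex.add_im, Complex.sub_im]
  linear_combination hαα

lemma inv_mul_inv_eq_inv_mul_add_sub_one {z w ζ : ℂ} (hζ : ‖ζ‖ = 1) (hz : 1 - z * conj ζ ≠ 0)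
    (hw : 1 - ζ * conj w ≠ 0) (hzw : 1 - z * conj w ≠ 0) :
    (1 - z * conj ζ)⁻¹ * (1 - ζ * conj w)⁻¹ =
      (1 - z * conj w)⁻¹ * ((1 - z * conj ζ)⁻¹ + (1 - ζ * conj w)⁻¹ - 1) := by
  have hζζ : ζ * conj ζ = 1 := by
    rw [Complex.mul_conj, Complex.normSq_eq_norm_sq, hζ]; norm_num
  field_simp
  linear_combination (z * conj w) * hζζ

lemma add_div_sub_add_conj_add_div_sub {α u v : ℂ} (hα : ‖α‖ = 1) (hu : u ≠ α) (hv : v ≠ α) :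
    (α + u) / (α - u) + conj ((α + v) / (α - v)) =
      2 * ((1 - u * conj v) / ((1 - conj α * u) * (1 - α * conj v))) := by
  have hαα : α * conj α = 1 := by
    rw [Complex.mul_conj, Complex.normSq_eq_norm_sq, hα]; norm_num
  have h1 : α - u ≠ 0 := sub_ne_zero.mpr (Ne.symm hu)
  have h2 : conj α - conj v ≠ 0 := by
    rw [← map_sub]; exact (map_ne_zero _).mpr (sub_ne_zero.mpr (Ne.symm hv))
  have hnum : (α + u) * (conj α - conj v) + (α - u) * (conj α + conj v) =
      2 * (1 - u * conj v) := by linear_combination 2 * hαα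
  have hden : (α - u) * (conj α - conj v) = (1 - conj α * u) * (1 - α * conj v) := by
    linear_combination (1 - u * conj v) * hαα
  rw [map_div₀, map_add, map_sub, div_add_div _ _ h1 h2, hnum, hden, mul_div_assoc]

lemma unitDisk_eq_ball : unitDisk = Metric.ball 0 1 := by
  ext z; simp [unitDisk]

lemma isOpen_unitDisk : IsOpen unitDisk := unitDisk_eq_ball ▸ Metric.isOpen_ball

lemma isConnected_unitDisk : IsConnected unitDisk :=
  unitDisk_eq_ball ▸ (convex_ball 0 1).isConnected (Metric.nonempty_ball.mpr one_pos)

lemma add_conj_eq_add_conj_of_re_eq {F G : ℂ → ℂ} {U : Set ℂ} (hU : IsOpen U)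
    (hUc : IsConnected U) (hF : DifferentiableOn ℂ F U) (hG : DifferentiableOn ℂ G U)
    (hre : ∀ z ∈ U, (F z).re = (G z).re) {z w : ℂ} (hz : z ∈ U) (hw : w ∈ U) :
    F z + conj (F w) = G z + conj (G w) := by
  obtain ⟨c, hc⟩ := ((hF.sub hG).analyticOnNhd hU).eq_const_of_re_eq_const (c₀ := 0)
    (fun x hx => by simp [hre x hx]) hU hUc
  simp only [Pi.sub_apply] at hc
  have hcre : c.re = 0 := by rw [← hc w hw, Complex.sub_re, hre w hw, sub_self]
  have hcz : F z = G z + c := by linear_combination hc z hz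
  have hcw : conj (F w) = conj (G w) + conj c := by
    rw [← map_add]; congr 1; linear_combination hc w hw
  have hcc : c + conj c = 0 := by
    rw [Complex.add_conj, hcre]; simp
  linear_combination hcz + hcw + hcc

def cauchyTransform (μ : Measure ℂ) (z : ℂ) : ℂ := ∫ ζ, (1 - z * conj ζ)⁻¹ ∂μ

section CauchyTransform

variable {μ : Measure ℂ} [IsFiniteMeasure μ]

lemma integrable_inv_one_sub_mul_conj (hμ : ∀ᵐ ζ ∂μ, ‖ζ‖ ≤ 1) {z : ℂ} (hz : ‖z‖ < 1) :
    Integrable (fun ζ => (1 - z * conj ζ)⁻¹) μ := by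
  refine Integrable.of_bound (by fun_prop) (1 - ‖z‖)⁻¹ ?_
  filter_upwards [hμ] with ζ hζ
  rw [norm_inv]
  exact inv_anti₀ (by linarith) (one_sub_norm_le_norm_one_sub_mul_conj hζ)

lemma differentiableOn_cauchyTransform (hμ : ∀ᵐ ζ ∂μ, ‖ζ‖ ≤ 1) :
    DifferentiableOn ℂ (cauchyTransform μ) unitDisk := by
  intro z₀ (hz₀ : ‖z₀‖ < 1)
  set δ := (1 - ‖z₀‖) / 2
  have hδ : 0 < δ := by simp only [δ]; linarith
  have hball : ∀ x ∈ Metric.ball z₀ δ, δ < 1 - ‖x‖ := fun x hx => by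
    have := norm_le_norm_add_norm_sub' x z₀
    rw [Metric.mem_ball, dist_eq_norm] at hx
    simp only [δ] at *; linarith
  have hlower : ∀ᵐ ζ ∂μ, ∀ x ∈ Metric.ball z₀ δ, δ ≤ ‖1 - x * conj ζ‖ := by
    filter_upwards [hμ] with ζ hζ x hx
    exact (hball x hx).le.trans (one_sub_norm_le_norm_one_sub_mul_conj hζ)
  have hderiv := hasDerivAt_integral_of_dominated_loc_of_deriv_le
    (F := fun x ζ => (1 - x * conj ζ)⁻¹) (F' := fun x ζ => conj ζ / (1 - x * conj ζ) ^ 2)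
    (bound := fun _ => (δ ^ 2)⁻¹) (Metric.ball_mem_nhds z₀ hδ)
    (Eventually.of_forall fun x => by fun_prop)
    (integrable_inv_one_sub_mul_conj hμ hz₀) (Measurable.aestronglyMeasurable (by fun_prop)) ?_
    (integrable_const _) ?_
  · exact hderiv.2.differentiableAt.differentiableWithinAt
  · filter_upwards [hμ, hlower] with ζ hζ hζlower x hx
    rw [norm_div, norm_pow, Complex.norm_conj, div_eq_mul_inv]
    calc ‖ζ‖ * (‖1 - x * conj ζ‖ ^ 2)⁻¹ ≤ 1 * (δ ^ 2)⁻¹ := by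
          gcongr
          exact hζlower x hx
      _ = (δ ^ 2)⁻¹ := one_mul _
  · filter_upwards [hlower] with ζ hζlower x hx
    have hne : 1 - x * conj ζ ≠ 0 := norm_pos_iff.mp (hδ.trans_le (hζlower x hx))
    simpa only [id, one_mul, neg_neg] using
      (((hasDerivAt_id x).mul_const (conj ζ)).const_sub 1).fun_inv hne

lemma two_mul_re_cauchyTransform_sub_real_univ (hμ : ∀ᵐ ζ ∂μ, ‖ζ‖ = 1) {z : ℂ} (hz : ‖z‖ < 1) :
    2 * (cauchyTransform μ z).re - μ.real univ = poissonIntegral μ z := by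
  have hint := integrable_inv_one_sub_mul_conj (hμ.mono fun _ h => h.le) hz
  calc 2 * (cauchyTransform μ z).re - μ.real univ
      = ∫ ζ, (2 * ((1 - z * conj ζ)⁻¹).re - 1) ∂μ := by
        have hre : Integrable (fun ζ => ((1 - z * conj ζ)⁻¹).re) μ := hint.re
        rw [integral_sub (hre.const_mul 2) (integrable_const 1), integral_const_mul,
          integral_const, smul_eq_mul, mul_one, cauchyTransform]
        exact congrArg (2 * · - μ.real univ) (integral_re hint).symm
    _ = poissonIntegral μ z := by
        refine integral_congr_ae ?_
        filter_upwards [hμ] with ζ hζ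
        exact two_mul_re_inv_one_sub_mul_conj_sub_one hζ (by rintro rfl; linarith)

lemma integral_inv_mul_inv_eq_cauchyTransform (hμ : ∀ᵐ ζ ∂μ, ‖ζ‖ = 1) {z w : ℂ} (hz : ‖z‖ < 1)
    (hw : ‖w‖ < 1) :
    ∫ ζ, (1 - z * conj ζ)⁻¹ * (1 - ζ * conj w)⁻¹ ∂μ =
      (1 - z * conj w)⁻¹ * (cauchyTransform μ z + conj (cauchyTransform μ w) - μ.real univ) := by
  have hμ' : ∀ᵐ ζ ∂μ, ‖ζ‖ ≤ 1 := hμ.mono fun _ h => h.le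
  have hconj : conj (cauchyTransform μ w) = ∫ ζ, (1 - ζ * conj w)⁻¹ ∂μ := by
    simp only [cauchyTransform, ← integral_conj, conj_inv_one_sub_mul_conj]
  have hintz := integrable_inv_one_sub_mul_conj hμ' hz
  have hintw : Integrable (fun ζ => (1 - ζ * conj w)⁻¹) μ := by
    simpa only [ContinuousLinearEquiv.coe_coe, Complex.conjCLE_apply,
      conj_inv_one_sub_mul_conj] using
      Complex.conjCLE.toContinuousLinearMap.integrable_comp
        (integrable_inv_one_sub_mul_conj hμ' hw)
  calc ∫ ζ, (1 - z * conj ζ)⁻¹ * (1 - ζ * conj w)⁻¹ ∂μ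
      = ∫ ζ, (1 - z * conj w)⁻¹ * ((1 - z * conj ζ)⁻¹ + (1 - ζ * conj w)⁻¹ - 1) ∂μ := by
        refine integral_congr_ae ?_
        filter_upwards [hμ] with ζ hζ
        refine inv_mul_inv_eq_inv_mul_add_sub_one hζ (one_sub_mul_conj_ne_zero hz hζ.le) ?_
          (one_sub_mul_conj_ne_zero hz hw.le)
        intro h
        exact one_sub_mul_conj_ne_zero hw hζ.le (by simpa [mul_comm] using congrArg conj h)
    _ = _ := by
        rw [integral_const_mul, integral_sub (hintz.fun_add hintw) (integrable_const 1),
          integral_add hintz hintw, integral_const, hconj, cauchyTransform]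
        simp

end CauchyTransform

lemma IsClarkMeasure.ae_norm_eq_one {I : ℂ → ℂ} {α : ℂ} {σ : Measure ℂ}
    (hσ : IsClarkMeasure I α σ) : ∀ᵐ ζ ∂σ, ‖ζ‖ = 1 :=
  (measure_eq_zero_iff_ae_notMem.mp hσ.2.1).mono fun ζ hζ => by simpa [unitCircle] using hζ

lemma IsClarkMeasure.cauchyTransform_add_conj {I : ℂ → ℂ} {α : ℂ} {σ : Measure ℂ}
    (hσ : IsClarkMeasure I α σ) (hId : DifferentiableOn ℂ I unitDisk)
    (hImaps : MapsTo I unitDisk unitDisk) (hα : ‖α‖ = 1) {z w : ℂ} (hz : z ∈ unitDisk)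
    (hw : w ∈ unitDisk) :
    cauchyTransform σ z + conj (cauchyTransform σ w) - σ.real univ =
      (1 - I z * conj (I w)) / ((1 - conj α * I z) * (1 - α * conj (I w))) := by
  have : IsFiniteMeasure σ := hσ.1
  have hIα : ∀ x ∈ unitDisk, I x ≠ α := fun x hx h =>
    (show ‖I x‖ < 1 from hImaps hx).ne (h ▸ hα)
  have hH := add_conj_eq_add_conj_of_re_eq (F := fun z => 2 * cauchyTransform σ z - σ.real univ)
    (G := fun z => (α + I z) / (α - I z)) isOpen_unitDisk isConnected_unitDisk
    (((differentiableOn_cauchyTransform (hσ.ae_norm_eq_one.mono fun _ h => h.le)).const_mul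
      2).sub_const _)
    ((hId.const_add α).div (hId.const_sub α) fun x hx => sub_ne_zero.mpr (hIα x hx).symm)
    (fun x hx => ?_) hz hw
  · rw [add_div_sub_add_conj_add_div_sub hα (hIα z hz) (hIα w hw)] at hH
    simp only [map_sub, map_mul, Complex.conj_ofReal, map_ofNat] at hH
    linear_combination hH / 2
  · rw [re_add_div_sub hα, ← hσ.2.2 x hx,
      ← two_mul_re_cauchyTransform_sub_real_univ hσ.ae_norm_eq_one hx]
    simp

/-- the value of the double Cauchy integral against a Clark measure. -/
theorem cauchy_integral_clark (I Ib : ℂ → ℂ) (hI : IsInner I Ib)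
    (α : ℂ) (hα : α ∈ unitCircle) (σ : Measure ℂ) (hσ : IsClarkMeasure I α σ) :
    ∀ z ∈ unitDisk, ∀ w ∈ unitDisk,
      ∫ ζ, (1 - z * (starRingEnd ℂ) ζ)⁻¹ * (1 - ζ * (starRingEnd ℂ) w)⁻¹ ∂σ =
        ((1 - I z * (starRingEnd ℂ) (I w)) /
            ((1 - (starRingEnd ℂ) α * I z) * (1 - α * (starRingEnd ℂ) (I w)))) *
          (1 - z * (starRingEnd ℂ) w)⁻¹ := by
  intro z hz w hw
  have : IsFiniteMeasure σ := hσ.1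
  rw [integral_inv_mul_inv_eq_cauchyTransform hσ.ae_norm_eq_one hz hw,
    hσ.cauchyTransform_add_conj hI.1 hI.2.1 hα hz hw, mul_comm]
end
end
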